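/- Let h₊, h₋ : ℝ → Matrix (Fin n) (Fin n) ℂ be differentiable families of invertible matrices, and define H(k) = Matrix.fromBlocks 0 (h₊ k) (h₋ k) 0. Then H(k) is invertible for every k, and the trace identity Tr[H(k)⁻¹ · (deriv H k)] = Tr[h₊(k)⁻¹ · (deriv h₊ k)] + Tr[h₋(k)⁻¹ · (deriv h₋ k)] holds pointwise; consequently (1/(2πi)) ∫₀^{2π} Tr[H(k)⁻¹ · (deriv H k)] dk = w₁[h₊] + w₁[h₋], i.e., the 1D winding number of the full sublattice-symmetric Hamiltonian is the sum of the 1D winding numbers of its off-diagonal blocks. -/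

import Mathlib

open Matrix MeasureTheory intervalIntegral

/-- Entrywise derivative of a one-parameter family of matrices. -/
noncomputable def matDeriv {m : Type*} (h : ℝ → Matrix m m ℂ) (k : ℝ) : Matrix m m ℂ :=
  Matrix.of fun i j => deriv (fun t => h t i j) k

/-- The 1D winding number `w₁[h] = (1/(2πi)) ∫₀^{2π} Tr[h(k)⁻¹ · h'(k)] dk` of a family of
invertible matrices, with `h'` the entrywise derivative. -/
noncomputable def w1 {m : Type*} [Fintype m] [DecidableEq m] (h : ℝ → Matrix m m ℂ) : ℂ :=
  (1 / (2 * Real.pi * Complex.I)) *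
    ∫ k in (0 : ℝ)..(2 * Real.pi), ((h k)⁻¹ * matDeriv h k).trace

/-!
The inverse of the off-diagonal block matrix `H = [[0, h₊], [h₋, 0]]` is `[[0, h₋⁻¹], [h₊⁻¹, 0]]`,
and its derivative is `[[0, h₊'], [h₋', 0]]`, so `H⁻¹ H'` is block diagonal with blocks
`h₋⁻¹ h₋'` and `h₊⁻¹ h₊'`. Taking traces gives the pointwise identity, and integrating it gives
the additivity of the winding number.
-/

namespace Matrix

theorem trace_fromBlocks {l m R : Type*} [Fintype l] [Fintype m] [AddCommMonoid R]
    (A : Matrix l l R) (B : Matrix l m R) (C : Matrix m l R) (D : Matrix m m R) :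
    (fromBlocks A B C D).trace = A.trace + D.trace := by
  simp [trace, Fintype.sum_sum_type]

section Antidiagonal

variable {n R : Type*} [Fintype n] [DecidableEq n] [CommRing R] {B C : Matrix n n R}

theorem fromBlocks_antidiag_mul_inv (hB : IsUnit B) (hC : IsUnit C) :
    fromBlocks 0 B C 0 * fromBlocks 0 C⁻¹ B⁻¹ 0 = 1 := by
  rw [fromBlocks_multiply, mul_nonsing_inv _ ((isUnit_iff_isUnit_det B).1 hB),
    mul_nonsing_inv _ ((isUnit_iff_isUnit_det C).1 hC)]
  simp [fromBlocks_one]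

theorem isUnit_fromBlocks_antidiag (hB : IsUnit B) (hC : IsUnit C) :
    IsUnit (fromBlocks 0 B C 0) :=
  IsUnit.of_mul_eq_one _ (fromBlocks_antidiag_mul_inv hB hC)

theorem inv_fromBlocks_antidiag (hB : IsUnit B) (hC : IsUnit C) :
    (fromBlocks 0 B C 0)⁻¹ = fromBlocks 0 C⁻¹ B⁻¹ 0 :=
  inv_eq_right_inv (fromBlocks_antidiag_mul_inv hB hC)

end Antidiagonal

end Matrix

theorem matDeriv_fromBlocks_antidiag {n : Type*} (B C : ℝ → Matrix n n ℂ) (k : ℝ) :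
    matDeriv (fun t => fromBlocks 0 (B t) (C t) 0) k =
      fromBlocks 0 (matDeriv B k) (matDeriv C k) 0 := by
  ext (i | i) (j | j) <;> simp [matDeriv]

theorem trace_inv_mul_matDeriv_fromBlocks_antidiag {n : Type*} [Fintype n] [DecidableEq n]
    {B C : ℝ → Matrix n n ℂ} {k : ℝ} (hB : IsUnit (B k)) (hC : IsUnit (C k)) :
    ((fromBlocks 0 (B k) (C k) 0)⁻¹ * matDeriv (fun t => fromBlocks 0 (B t) (C t) 0) k).trace =
      ((B k)⁻¹ * matDeriv B k).trace + ((C k)⁻¹ * matDeriv C k).trace := by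
  rw [inv_fromBlocks_antidiag hB hC, matDeriv_fromBlocks_antidiag, fromBlocks_multiply]
  simp only [Matrix.zero_mul, Matrix.mul_zero, add_zero, zero_add, trace_fromBlocks]
  exact add_comm _ _

theorem winding_number_of_sublattice_block_hamiltonian_general
    {n : ℕ} (hp hm : ℝ → Matrix (Fin n) (Fin n) ℂ)
    (hunitp : ∀ k, IsUnit (hp k)) (hunitm : ∀ k, IsUnit (hm k))
    (hintp : IntervalIntegrable (fun k => ((hp k)⁻¹ * matDeriv hp k).trace)
      volume 0 (2 * Real.pi))
    (hintm : IntervalIntegrable (fun k => ((hm k)⁻¹ * matDeriv hm k).trace)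
      volume 0 (2 * Real.pi))
    (H : ℝ → Matrix (Fin n ⊕ Fin n) (Fin n ⊕ Fin n) ℂ)
    (hH : ∀ k, H k = Matrix.fromBlocks 0 (hp k) (hm k) 0) :
    (∀ k, IsUnit (H k)) ∧
    (∀ k, ((H k)⁻¹ * matDeriv H k).trace =
      ((hp k)⁻¹ * matDeriv hp k).trace + ((hm k)⁻¹ * matDeriv hm k).trace) ∧
    (1 / (2 * Real.pi * Complex.I)) *
      (∫ k in (0 : ℝ)..(2 * Real.pi), ((H k)⁻¹ * matDeriv H k).trace) = w1 hp + w1 hm := by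
  obtain rfl : H = fun k => fromBlocks 0 (hp k) (hm k) 0 := funext hH
  have htrace k := trace_inv_mul_matDeriv_fromBlocks_antidiag (hunitp k) (hunitm k)
  refine ⟨fun k => isUnit_fromBlocks_antidiag (hunitp k) (hunitm k), htrace, ?_⟩
  rw [integral_congr fun k _ => htrace k, integral_add hintp hintm, w1, w1]
  ring

/-- For differentiable families of invertible matrices `h₊, h₋` and the
sublattice-symmetric Hamiltonian `H(k) = fromBlocks 0 (h₊ k) (h₋ k) 0`, `H(k)` is invertible for
every `k`, the trace identity
`Tr[H⁻¹ H'] = Tr[h₊⁻¹ h₊'] + Tr[h₋⁻¹ h₋']` holds pointwise, and consequently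
`(1/(2πi)) ∫₀^{2π} Tr[H(k)⁻¹ H'(k)] dk = w₁[h₊] + w₁[h₋]`. -/
theorem winding_number_of_sublattice_block_hamiltonian
    {n : ℕ} (hp hm : ℝ → Matrix (Fin n) (Fin n) ℂ)
    (hdiffp : ∀ i j, Differentiable ℝ fun k => hp k i j)
    (hdiffm : ∀ i j, Differentiable ℝ fun k => hm k i j)
    (hunitp : ∀ k, IsUnit (hp k)) (hunitm : ∀ k, IsUnit (hm k))
    (hintp : IntervalIntegrable (fun k => ((hp k)⁻¹ * matDeriv hp k).trace)
      volume 0 (2 * Real.pi))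
    (hintm : IntervalIntegrable (fun k => ((hm k)⁻¹ * matDeriv hm k).trace)
      volume 0 (2 * Real.pi))
    (H : ℝ → Matrix (Fin n ⊕ Fin n) (Fin n ⊕ Fin n) ℂ)
    (hH : ∀ k, H k = Matrix.fromBlocks 0 (hp k) (hm k) 0) :
    (∀ k, IsUnit (H k)) ∧
    (∀ k, ((H k)⁻¹ * matDeriv H k).trace =
      ((hp k)⁻¹ * matDeriv hp k).trace + ((hm k)⁻¹ * matDeriv hm k).trace) ∧
    (1 / (2 * Real.pi * Complex.I)) *
      (∫ k in (0 : ℝ)..(2 * Real.pi), ((H k)⁻¹ * matDeriv H k).trace) = w1 hp + w1 hm :=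
  winding_number_of_sublattice_block_hamiltonian_general hp hm hunitp hunitm hintp hintm H hH
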